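/- (Soundness and completeness on the initial domain) There exists a constraint σ ∈ Ψ_{d₀} such that ⊢^{d₀} Γ → σ is derivable in DI and the empty instantiation is compatible with σ, if and only if ⊢ Γ is derivable in LK1. -/
import Mathlib


/-- First-order terms: de Bruijn bound variables, eigenvariables,
meta-variables, and function symbols applied to argument lists. -/
inductive Tm : Type
| bv : ℕ → Tm
| ev : ℕ → Tm
| mv : ℕ → Tm
| fn : ℕ → List Tm → Tm

/-- Substitute the term `u` for the bound variable of index `k`. -/
def Tm.bsub (k : ℕ) (u : Tm) : Tm → Tm
| bv i => if i = k then u else bv i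
| ev i => ev i
| mv i => mv i
| fn f ts => fn f (ts.attach.map (fun ⟨t, _⟩ => Tm.bsub k u t))
termination_by t => sizeOf t
decreasing_by simp_wf; have := List.sizeOf_lt_of_mem ‹_›; omega

/-- Apply an instantiation of the meta-variables to a term. -/
def Tm.msub (ρ : ℕ → Tm) : Tm → Tm
| bv i => bv i
| ev i => ev i
| mv i => ρ i
| fn f ts => fn f (ts.attach.map (fun ⟨t, _⟩ => Tm.msub ρ t))
termination_by t => sizeOf t
decreasing_by simp_wf; have := List.sizeOf_lt_of_mem ‹_›; omega

/-- Ground terms: built from eigenvariables and function symbols only. -/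
inductive Tm.Ground : Tm → Prop
| ev (i : ℕ) : Ground (ev i)
| fn (f : ℕ) (ts : List Tm) : (∀ t ∈ ts, Ground t) → Ground (fn f ts)

/-- All eigenvariables of the term are `< ke` and all meta-variables are `< kx`
(and no de Bruijn variable occurs: the term is locally closed). -/
inductive Tm.VarsBelow (ke kx : ℕ) : Tm → Prop
| ev (i : ℕ) : i < ke → VarsBelow ke kx (ev i)
| mv (i : ℕ) : i < kx → VarsBelow ke kx (mv i)
| fn (f : ℕ) (ts : List Tm) : (∀ t ∈ ts, VarsBelow ke kx t) → VarsBelow ke kx (fn f ts)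

/-- The eigenvariable `y` occurs in the term. -/
inductive Tm.HasEv (y : ℕ) : Tm → Prop
| ev : HasEv y (ev y)
| fn (f : ℕ) (ts : List Tm) (t : Tm) : t ∈ ts → HasEv y t → HasEv y (fn f ts)

/-- Literals: a polarity, a predicate symbol, and a list of arguments. -/
abbrev Lit : Type := Bool × ℕ × List Tm

/-- Apply an instantiation of the meta-variables to a literal. -/
def Lit.msub (ρ : ℕ → Tm) (l : Lit) : Lit := (l.1, l.2.1, l.2.2.map (Tm.msub ρ))

/-- First-order formulae in negation normal form. -/
inductive Fm : Type
| lit : Bool → ℕ → List Tm → Fm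
| conj : Fm → Fm → Fm
| disj : Fm → Fm → Fm
| all : Fm → Fm
| ex : Fm → Fm

def Fm.bsub (k : ℕ) (u : Tm) : Fm → Fm
| lit b p ts => lit b p (ts.map (Tm.bsub k u))
| conj A B => conj (A.bsub k u) (B.bsub k u)
| disj A B => disj (A.bsub k u) (B.bsub k u)
| all A => all (A.bsub (k+1) u)
| ex A => ex (A.bsub (k+1) u)

/-- `A.opn u` is `A[x := u]`: the body of a quantifier, opened with the term `u`. -/
def Fm.opn (u : Tm) (A : Fm) : Fm := A.bsub 0 u

/-- Apply an instantiation of the meta-variables to a formula. -/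
def Fm.msub (ρ : ℕ → Tm) : Fm → Fm
| lit b p ts => lit b p (ts.map (Tm.msub ρ))
| conj A B => conj (A.msub ρ) (B.msub ρ)
| disj A B => disj (A.msub ρ) (B.msub ρ)
| all A => all (A.msub ρ)
| ex A => ex (A.msub ρ)

/-- All free variables of the formula are declared: eigenvariables `< ke`,
meta-variables `< kx`. -/
inductive Fm.VarsBelow (ke kx : ℕ) : Fm → Prop
| lit (b : Bool) (p : ℕ) (ts : List Tm) : (∀ t ∈ ts, Tm.VarsBelow ke kx t) → VarsBelow ke kx (lit b p ts)
| conj {A B} : VarsBelow ke kx A → VarsBelow ke kx B → VarsBelow ke kx (conj A B)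
| disj {A B} : VarsBelow ke kx A → VarsBelow ke kx B → VarsBelow ke kx (disj A B)
| all {A} : VarsBelow ke kx A → VarsBelow ke kx (all A)
| ex {A} : VarsBelow ke kx A → VarsBelow ke kx (ex A)

/-- The eigenvariable `y` occurs (free) in the formula. -/
inductive Fm.HasEv (y : ℕ) : Fm → Prop
| lit (b : Bool) (p : ℕ) (ts : List Tm) (t : Tm) : t ∈ ts → Tm.HasEv y t → HasEv y (lit b p ts)
| conjl {A B} : HasEv y A → HasEv y (conj A B)
| conjr {A B} : HasEv y B → HasEv y (conj A B)
| disjl {A B} : HasEv y A → HasEv y (disj A B)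
| disjr {A B} : HasEv y B → HasEv y (disj A B)
| all {A} : HasEv y A → HasEv y (all A)
| ex {A} : HasEv y A → HasEv y (ex A)

/-- The set of literals of a context. -/
def lits (Γ : Multiset Fm) : Set Lit := {l | Fm.lit l.1 l.2.1 l.2.2 ∈ Γ}

/-- Domains: the initial domain, extended by fresh eigenvariables and
fresh meta-variables. -/
inductive Dom : Type
| init : Dom
| addE : Dom → Dom
| addX : Dom → Dom

/-- Number of declared eigenvariables. -/
def Dom.numE : Dom → ℕ
| init => 0
| addE d => d.numE + 1
| addX d => d.numE

/-- Number of declared meta-variables. -/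
def Dom.numX : Dom → ℕ
| init => 0
| addE d => d.numX
| addX d => d.numX + 1

/-- A term of domain `d` that is ground: only eigenvariables of `d`. -/
def TmOfDom (d : Dom) (t : Tm) : Prop := Tm.VarsBelow d.numE 0 t

/-- A formula of domain `d`. -/
def FmOfDom (d : Dom) (A : Fm) : Prop := Fm.VarsBelow d.numE d.numX A

/-- A context of domain `d`. -/
def CtxOfDom (d : Dom) (Γ : Multiset Fm) : Prop := ∀ A ∈ Γ, FmOfDom d A

/-- Instantiations of domain `d`: each meta-variable declared in `d` is mapped
to a ground term over the eigenvariables declared before it. -/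
def InstOK : Dom → (ℕ → Tm) → Prop
| .init, _ => True
| .addE d, ρ => InstOK d ρ
| .addX d, ρ => InstOK d ρ ∧ TmOfDom d (ρ d.numX)

/-- Extend an instantiation with the term `t` for the meta-variable `n`. -/
def extend (ρ : ℕ → Tm) (n : ℕ) (t : Tm) : ℕ → Tm := fun i => if i = n then t else ρ i

/-- The empty instantiation (of the initial domain, which declares no
meta-variables, so that the values below are irrelevant). -/
def emptyInst : ℕ → Tm := fun _ => Tm.fn 0 []
/-- The ground one-sided sequent calculus `LK1` modulo the theory given by the
ground validity predicate `models` on sets of ground literals. -/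
inductive LK1 (models : Set Lit → Prop) : Multiset Fm → Prop
| ax (Γ : Multiset Fm) : models (lits Γ) → LK1 models Γ
| conj {Γ A B} : LK1 models (A ::ₘ Γ) → LK1 models (B ::ₘ Γ) →
    LK1 models (Fm.conj A B ::ₘ Γ)
| disj {Γ A B} : LK1 models (A ::ₘ B ::ₘ Γ) → LK1 models (Fm.disj A B ::ₘ Γ)
| ex {Γ A} (t : Tm) : t.Ground →
    LK1 models (Fm.opn t A ::ₘ Fm.ex A ::ₘ Γ) → LK1 models (Fm.ex A ::ₘ Γ)
| all {Γ A} (y : ℕ) : (∀ B ∈ (Fm.all A ::ₘ Γ), ¬ Fm.HasEv y B) →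
    LK1 models (Fm.opn (Tm.ev y) A ::ₘ Γ) → LK1 models (Fm.all A ::ₘ Γ)
/-- The constraint-producing sequent calculus `DI`, parameterised by the
constraint sets `Psi` (indexed by the number of declared meta-variables),
the meet operator, the projections, and the constraint-producing predicate
`bbc` of the background reasoner. `DI d Γ σ` is the sequent `⊢^d Γ → σ`. -/
inductive DI (Psi : ℕ → Type) (meet : ∀ {n}, Psi n → Psi n → Psi n)
    (proj : ∀ {n}, Psi (n+1) → Psi n)
    (bbc : ∀ d : Dom, Set Lit → Psi d.numX → Prop) :
    ∀ d : Dom, Multiset Fm → Psi d.numX → Prop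
| ax {d : Dom} (Γ : Multiset Fm) (σ : Psi d.numX) :
    bbc d (lits Γ) σ → DI Psi meet proj bbc d Γ σ
| conj {d : Dom} {Γ A B} {σ σ' : Psi d.numX} :
    DI Psi meet proj bbc d (A ::ₘ Γ) σ → DI Psi meet proj bbc d (B ::ₘ Γ) σ' →
    DI Psi meet proj bbc d (Fm.conj A B ::ₘ Γ) (meet σ σ')
| disj {d : Dom} {Γ A B} {σ : Psi d.numX} :
    DI Psi meet proj bbc d (A ::ₘ B ::ₘ Γ) σ →
    DI Psi meet proj bbc d (Fm.disj A B ::ₘ Γ) σ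
| ex {d : Dom} {Γ A} {σ : Psi (d.numX + 1)} :
    DI Psi meet proj bbc d.addX (Fm.opn (Tm.mv d.numX) A ::ₘ Fm.ex A ::ₘ Γ) σ →
    DI Psi meet proj bbc d (Fm.ex A ::ₘ Γ) (proj σ)
| all {d : Dom} {Γ A} {σ : Psi d.numX} :
    DI Psi meet proj bbc d.addE (Fm.opn (Tm.ev d.numE) A ::ₘ Γ) σ →
    DI Psi meet proj bbc d (Fm.all A ::ₘ Γ) σ

section Lemmas

theorem Tm.VarsBelow.mono {ke kx ke' kx' : ℕ} (h1 : ke ≤ ke') (h2 : kx ≤ kx') :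
    ∀ {t : Tm}, Tm.VarsBelow ke kx t → Tm.VarsBelow ke' kx' t := by
  intro t h
  induction h with
  | ev i hi => exact .ev i (lt_of_lt_of_le hi h1)
  | mv i hi => exact .mv i (lt_of_lt_of_le hi h2)
  | fn f ts h ih => exact .fn f ts ih

theorem Tm.bsub_of_vb {ke kx k : ℕ} {u t : Tm} (h : Tm.VarsBelow ke kx t) :
    Tm.bsub k u t = t := by
  induction h with
  | ev i hi => simp only [Tm.bsub.eq_2]
  | mv i hi => simp only [Tm.bsub.eq_3]
  | fn f ts h ih =>
    simp only [Tm.bsub.eq_4]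
    congr 1
    calc ts.attach.map (fun x => Tm.bsub k u x.1) = ts.attach.map (fun x => x.1) := by
          exact List.map_congr_left (fun x _ => ih x.1 x.2)
      _ = ts := List.attach_map_subtype_val ts

theorem Tm.msub_congr {ke kx : ℕ} {ρ ρ' : ℕ → Tm} {t : Tm}
    (h : Tm.VarsBelow ke kx t) (hρ : ∀ i < kx, ρ i = ρ' i) :
    t.msub ρ = t.msub ρ' := by
  induction h with
  | ev i hi => simp only [Tm.msub.eq_2]
  | mv i hi => simp only [Tm.msub.eq_3, Tm.msub.eq_3]; exact hρ i hi
  | fn f ts h ih =>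
    simp only [Tm.msub.eq_4, Tm.msub.eq_4]
    congr 1
    exact List.map_congr_left (fun x _ => ih x.1 x.2)

theorem Tm.msub_of_vb0 {ke : ℕ} {ρ : ℕ → Tm} {t : Tm} (h : Tm.VarsBelow ke 0 t) :
    t.msub ρ = t := by
  induction h with
  | ev i hi => simp only [Tm.msub.eq_2]
  | mv i hi => omega
  | fn f ts h ih =>
    simp only [Tm.msub.eq_4]
    congr 1
    calc ts.attach.map (fun x => Tm.msub ρ x.1) = ts.attach.map (fun x => x.1) := by
          exact List.map_congr_left (fun x _ => ih x.1 x.2)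
      _ = ts := List.attach_map_subtype_val ts

theorem Tm.ground_of_vb0 {ke : ℕ} {t : Tm} (h : Tm.VarsBelow ke 0 t) : t.Ground := by
  induction h with
  | ev i hi => exact .ev i
  | mv i hi => omega
  | fn f ts h ih => exact .fn f ts ih

theorem Tm.msub_vb {ke kx : ℕ} {ρ : ℕ → Tm} {t : Tm}
    (h : Tm.VarsBelow ke kx t) (hρ : ∀ i < kx, Tm.VarsBelow ke 0 (ρ i)) :
    Tm.VarsBelow ke 0 (t.msub ρ) := by
  induction h with
  | ev i hi => simp only [Tm.msub.eq_2]; exact .ev i hi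
  | mv i hi => simp only [Tm.msub.eq_3]; exact hρ i hi
  | fn f ts h ih =>
    simp only [Tm.msub.eq_4]
    refine .fn f _ ?_
    intro t' ht'
    simp only [List.mem_map] at ht'
    obtain ⟨x, hx, rfl⟩ := ht'
    exact ih x.1 x.2

theorem Tm.not_hasEv {ke kx y : ℕ} (hy : ke ≤ y) :
    ∀ {t : Tm}, Tm.HasEv y t → Tm.VarsBelow ke kx t → False := by
  intro t he
  induction he with
  | ev => intro h; cases h with | ev _ hi => omega
  | fn f ts t ht _ ih =>
    intro h; cases h with | fn _ _ h => exact ih (h t ht)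

end Lemmas
theorem Fm.VarsBelow.mono {ke kx ke' kx' : ℕ} (h1 : ke ≤ ke') (h2 : kx ≤ kx') :
    ∀ {A : Fm}, Fm.VarsBelow ke kx A → Fm.VarsBelow ke' kx' A := by
  intro A h
  induction h with
  | lit b p ts hts => exact .lit b p ts (fun t ht => (hts t ht).mono h1 h2)
  | conj _ _ ihA ihB => exact .conj ihA ihB
  | disj _ _ ihA ihB => exact .disj ihA ihB
  | all _ ih => exact .all ih
  | ex _ ih => exact .ex ih

theorem Fm.bsub_of_vb {ke kx : ℕ} {A : Fm} (h : Fm.VarsBelow ke kx A) :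
    ∀ {k : ℕ} {u : Tm}, A.bsub k u = A := by
  induction h with
  | lit b p ts hts =>
    intro k u
    simp only [Fm.bsub]
    congr 1
    exact List.map_congr_left (fun t ht => by rw [Tm.bsub_of_vb (hts t ht)]; rfl) |>.trans (List.map_id ts)
  | conj _ _ ihA ihB => intro k u; simp only [Fm.bsub]; rw [ihA, ihB]
  | disj _ _ ihA ihB => intro k u; simp only [Fm.bsub]; rw [ihA, ihB]
  | all _ ih => intro k u; simp only [Fm.bsub]; rw [ih]
  | ex _ ih => intro k u; simp only [Fm.bsub]; rw [ih]

theorem Fm.opn_of_vb {ke kx : ℕ} {A : Fm} (h : Fm.VarsBelow ke kx A) (u : Tm) :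
    A.opn u = A := Fm.bsub_of_vb h

theorem Fm.msub_congr {ke kx : ℕ} {ρ ρ' : ℕ → Tm} {A : Fm}
    (h : Fm.VarsBelow ke kx A) (hρ : ∀ i < kx, ρ i = ρ' i) :
    A.msub ρ = A.msub ρ' := by
  induction h with
  | lit b p ts hts =>
    simp only [Fm.msub]
    congr 1
    exact List.map_congr_left (fun t ht => Tm.msub_congr (hts t ht) hρ)
  | conj _ _ ihA ihB => simp only [Fm.msub]; rw [ihA, ihB]
  | disj _ _ ihA ihB => simp only [Fm.msub]; rw [ihA, ihB]
  | all _ ih => simp only [Fm.msub]; rw [ih]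
  | ex _ ih => simp only [Fm.msub]; rw [ih]

theorem Fm.msub_of_vb0 {ke : ℕ} {ρ : ℕ → Tm} {A : Fm} (h : Fm.VarsBelow ke 0 A) :
    A.msub ρ = A := by
  induction h with
  | lit b p ts hts =>
    simp only [Fm.msub]
    congr 1
    exact List.map_congr_left (fun t ht => by rw [Tm.msub_of_vb0 (hts t ht)]; rfl) |>.trans (List.map_id ts)
  | conj _ _ ihA ihB => simp only [Fm.msub]; rw [ihA, ihB]
  | disj _ _ ihA ihB => simp only [Fm.msub]; rw [ihA, ihB]
  | all _ ih => simp only [Fm.msub]; rw [ih]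
  | ex _ ih => simp only [Fm.msub]; rw [ih]

theorem Fm.msub_vb {ke kx : ℕ} {ρ : ℕ → Tm} {A : Fm}
    (h : Fm.VarsBelow ke kx A) (hρ : ∀ i < kx, Tm.VarsBelow ke 0 (ρ i)) :
    Fm.VarsBelow ke 0 (A.msub ρ) := by
  induction h with
  | lit b p ts hts =>
    simp only [Fm.msub]
    refine .lit b p _ ?_
    intro t' ht'
    simp only [List.mem_map] at ht'
    obtain ⟨t, ht, rfl⟩ := ht'
    exact Tm.msub_vb (hts t ht) hρ
  | conj _ _ ihA ihB => exact .conj ihA ihB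
  | disj _ _ ihA ihB => exact .disj ihA ihB
  | all _ ih => exact .all ih
  | ex _ ih => exact .ex ih

theorem Fm.not_hasEv {ke kx y : ℕ} (hy : ke ≤ y) :
    ∀ {A : Fm}, Fm.HasEv y A → Fm.VarsBelow ke kx A → False := by
  intro A he
  induction he with
  | lit b p ts t ht hev =>
    intro h; cases h with | lit _ _ _ hts => exact Tm.not_hasEv hy hev (hts t ht)
  | conjl _ ih => intro h; cases h with | conj hA _ => exact ih hA
  | conjr _ ih => intro h; cases h with | conj _ hB => exact ih hB
  | disjl _ ih => intro h; cases h with | disj hA _ => exact ih hA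
  | disjr _ ih => intro h; cases h with | disj _ hB => exact ih hB
  | all _ ih => intro h; cases h with | all hA => exact ih hA
  | ex _ ih => intro h; cases h with | ex hA => exact ih hA
theorem Fm.msub_eq_lit {ρ : ℕ → Tm} {B : Fm} {b p ts} (h : B.msub ρ = Fm.lit b p ts) :
    ∃ ts', B = Fm.lit b p ts' ∧ ts'.map (Tm.msub ρ) = ts := by
  cases B <;> simp_all [Fm.msub]

theorem Fm.msub_eq_conj {ρ : ℕ → Tm} {B : Fm} {A₁ A₂} (h : B.msub ρ = Fm.conj A₁ A₂) :
    ∃ B₁ B₂, B = Fm.conj B₁ B₂ ∧ B₁.msub ρ = A₁ ∧ B₂.msub ρ = A₂ := by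
  cases B <;> simp_all [Fm.msub]

theorem Fm.msub_eq_disj {ρ : ℕ → Tm} {B : Fm} {A₁ A₂} (h : B.msub ρ = Fm.disj A₁ A₂) :
    ∃ B₁ B₂, B = Fm.disj B₁ B₂ ∧ B₁.msub ρ = A₁ ∧ B₂.msub ρ = A₂ := by
  cases B <;> simp_all [Fm.msub]

theorem Fm.msub_eq_all {ρ : ℕ → Tm} {B : Fm} {A} (h : B.msub ρ = Fm.all A) :
    ∃ B₁, B = Fm.all B₁ ∧ B₁.msub ρ = A := by
  cases B <;> simp_all [Fm.msub]

theorem Fm.msub_eq_ex {ρ : ℕ → Tm} {B : Fm} {A} (h : B.msub ρ = Fm.ex A) :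
    ∃ B₁, B = Fm.ex B₁ ∧ B₁.msub ρ = A := by
  cases B <;> simp_all [Fm.msub]

theorem lits_msub (ρ : ℕ → Tm) (Δ : Multiset Fm) :
    lits (Δ.map (Fm.msub ρ)) = Lit.msub ρ '' lits Δ := by
  ext l
  obtain ⟨b, p, ts⟩ := l
  simp only [lits, Set.mem_setOf_eq, Multiset.mem_map, Set.mem_image]
  constructor
  · rintro ⟨B, hB, hEq⟩
    obtain ⟨ts', rfl, hts⟩ := Fm.msub_eq_lit hEq
    exact ⟨(b, p, ts'), hB, by simp [Lit.msub, hts]⟩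
  · rintro ⟨⟨b', p', ts'⟩, hmem, hEq⟩
    simp only [Lit.msub, Prod.mk.injEq] at hEq
    obtain ⟨rfl, rfl, rfl⟩ := hEq
    exact ⟨Fm.lit b' p' ts', hmem, rfl⟩

theorem InstOK_congr : ∀ (d : Dom) {ρ ρ' : ℕ → Tm},
    (∀ i < d.numX, ρ i = ρ' i) → InstOK d ρ → InstOK d ρ'
  | .init, _, _, _, _ => trivial
  | .addE d, ρ, ρ', h, hok => InstOK_congr d h hok
  | .addX d, ρ, ρ', h, hok => by
    refine ⟨InstOK_congr d (fun i hi => h i (by simp only [Dom.numX]; omega)) hok.1, ?_⟩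
    rw [← h d.numX (by simp only [Dom.numX]; omega)]
    exact hok.2

theorem InstOK_vals : ∀ (d : Dom) {ρ : ℕ → Tm}, InstOK d ρ →
    ∀ i < d.numX, Tm.VarsBelow d.numE 0 (ρ i)
  | .init, _, _, i, hi => by simp [Dom.numX] at hi
  | .addE d, ρ, hok, i, hi =>
    (InstOK_vals d hok i hi).mono (by simp only [Dom.numE]; omega) le_rfl
  | .addX d, ρ, hok, i, hi => by
    rcases Nat.lt_succ_iff_lt_or_eq.mp hi with h | rfl
    · exact InstOK_vals d hok.1 i h
    · exact hok.2

theorem CtxOfDom_cons {d : Dom} {A : Fm} {Γ : Multiset Fm} :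
    CtxOfDom d (A ::ₘ Γ) ↔ FmOfDom d A ∧ CtxOfDom d Γ := by
  constructor
  · intro h
    exact ⟨h A (Multiset.mem_cons_self A Γ), fun B hB => h B (Multiset.mem_cons_of_mem hB)⟩
  · rintro ⟨hA, hΓ⟩ B hB
    rcases Multiset.mem_cons.mp hB with rfl | hB
    · exact hA
    · exact hΓ B hB

theorem CtxOfDom_addE {d : Dom} {Γ : Multiset Fm} (h : CtxOfDom d Γ) :
    CtxOfDom d.addE Γ :=
  fun A hA => (h A hA).mono (by simp only [Dom.numE]; omega) le_rfl

theorem CtxOfDom_addX {d : Dom} {Γ : Multiset Fm} (h : CtxOfDom d Γ) :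
    CtxOfDom d.addX Γ :=
  fun A hA => (h A hA).mono le_rfl (by simp only [Dom.numX]; omega)
section Main

variable {Psi : ℕ → Type} {meet : ∀ {n}, Psi n → Psi n → Psi n}
    {proj : ∀ {n}, Psi (n+1) → Psi n}
    {bind : ∀ {n}, Psi (n+1) → (ℕ → Tm) → Tm}
    {eps : ∀ {n}, (ℕ → Tm) → Psi n → Prop}
    {models : Set Lit → Prop}
    {bbc : ∀ d : Dom, Set Lit → Psi d.numX → Prop}

theorem DI_sound
    (Aproj : ∀ (d : Dom) (ρ : ℕ → Tm) (t : Tm) (σ : Psi (d.numX + 1)),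
      InstOK d ρ → TmOfDom d t → eps (extend ρ d.numX t) σ → eps ρ (proj σ))
    (Aeps : ∀ (d : Dom) (ρ : ℕ → Tm) (σ : Psi (d.numX + 1)), InstOK d ρ →
      eps ρ (proj σ) → eps (extend ρ d.numX (bind σ ρ)) σ)
    (Abind : ∀ (d : Dom) (ρ : ℕ → Tm) (σ : Psi (d.numX + 1)), InstOK d ρ →
      TmOfDom d (bind σ ρ))
    (Ameet : ∀ {n} (ρ : ℕ → Tm) (σ σ' : Psi n),
      (eps ρ σ ∧ eps ρ σ') ↔ eps ρ (meet σ σ'))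
    (Apg : ∀ (d : Dom) (A : Set Lit),
      (∀ l ∈ A, ∀ t ∈ l.2.2, Tm.VarsBelow d.numE d.numX t) →
      ∀ ρ : ℕ → Tm, InstOK d ρ →
        (models ((Lit.msub ρ) '' A) ↔ ∃ σ : Psi d.numX, bbc d A σ ∧ eps ρ σ))
    {d : Dom} {Γ : Multiset Fm} {σ : Psi d.numX}
    (h : DI Psi (fun σ σ' => meet σ σ') (fun σ => proj σ) bbc d Γ σ) :
    ∀ ρ : ℕ → Tm, InstOK d ρ → CtxOfDom d Γ → eps ρ σ →
      LK1 models (Γ.map (Fm.msub ρ)) := by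
  induction h with
  | ax Γ σ hbbc =>
    rename_i d
    intro ρ hok hctx heps
    apply LK1.ax
    rw [lits_msub]
    refine (Apg d (lits Γ) ?_ ρ hok).mpr ⟨σ, hbbc, heps⟩
    intro l hl t ht
    have hfm : Fm.VarsBelow d.numE d.numX (Fm.lit l.1 l.2.1 l.2.2) := hctx _ hl
    cases hfm with | lit _ _ _ hts => exact hts t ht
  | conj h1 h2 ih1 ih2 =>
    rename_i d Γ A B σ σ'
    intro ρ hok hctx heps
    obtain ⟨e1, e2⟩ := (Ameet ρ σ σ').mpr heps
    obtain ⟨hAB, hΓ⟩ := CtxOfDom_cons.mp hctx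
    have hA : Fm.VarsBelow d.numE d.numX A := by cases hAB with | conj hA hB => exact hA
    have hB : Fm.VarsBelow d.numE d.numX B := by cases hAB with | conj hA hB => exact hB
    have l1 := ih1 ρ hok (CtxOfDom_cons.mpr ⟨hA, hΓ⟩) e1
    have l2 := ih2 ρ hok (CtxOfDom_cons.mpr ⟨hB, hΓ⟩) e2
    simp only [Multiset.map_cons] at l1 l2 ⊢
    show LK1 models (Fm.conj (A.msub ρ) (B.msub ρ) ::ₘ Γ.map (Fm.msub ρ))
    exact LK1.conj l1 l2
  | disj h1 ih1 =>
    rename_i d Γ A B σ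
    intro ρ hok hctx heps
    obtain ⟨hAB, hΓ⟩ := CtxOfDom_cons.mp hctx
    have hA : Fm.VarsBelow d.numE d.numX A := by cases hAB with | disj hA hB => exact hA
    have hB : Fm.VarsBelow d.numE d.numX B := by cases hAB with | disj hA hB => exact hB
    have l1 := ih1 ρ hok (CtxOfDom_cons.mpr ⟨hA, CtxOfDom_cons.mpr ⟨hB, hΓ⟩⟩) heps
    simp only [Multiset.map_cons] at l1 ⊢
    show LK1 models (Fm.disj (A.msub ρ) (B.msub ρ) ::ₘ Γ.map (Fm.msub ρ))
    exact LK1.disj l1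
  | ex h1 ih1 =>
    rename_i d Γ A σ
    intro ρ hok hctx heps
    obtain ⟨hEx, hΓ⟩ := CtxOfDom_cons.mp hctx
    have hA : Fm.VarsBelow d.numE d.numX A := by cases hEx with | ex hA => exact hA
    set t := bind σ ρ with ht
    have htd : TmOfDom d t := Abind d ρ σ hok
    have heps' : eps (extend ρ d.numX t) σ := Aeps d ρ σ hok heps
    have hagree : ∀ i < d.numX, ρ i = extend ρ d.numX t i := by
      intro i hi; simp only [extend]; rw [if_neg (by omega)]
    have hok' : InstOK d.addX (extend ρ d.numX t) := by
      refine ⟨InstOK_congr d hagree hok, ?_⟩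
      simp only [extend, if_pos rfl]; exact htd
    have hctx' : CtxOfDom d.addX (Fm.opn (Tm.mv d.numX) A ::ₘ Fm.ex A ::ₘ Γ) := by
      rw [Fm.opn_of_vb hA]
      exact CtxOfDom_cons.mpr ⟨hA.mono le_rfl (by simp only [Dom.numX]; omega),
        CtxOfDom_addX (CtxOfDom_cons.mpr ⟨hEx, hΓ⟩)⟩
    have l1 := ih1 (extend ρ d.numX t) hok' hctx' heps'
    rw [Fm.opn_of_vb hA] at l1
    simp only [Multiset.map_cons] at l1 ⊢
    rw [← Fm.msub_congr hA hagree, ← Fm.msub_congr hEx hagree,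
      show Multiset.map (Fm.msub (extend ρ d.numX t)) Γ = Multiset.map (Fm.msub ρ) Γ from
        Multiset.map_congr rfl (fun B hB => (Fm.msub_congr (hΓ B hB) hagree).symm)] at l1
    show LK1 models (Fm.ex (A.msub ρ) ::ₘ Γ.map (Fm.msub ρ))
    have hAvb : Fm.VarsBelow d.numE 0 (A.msub ρ) := Fm.msub_vb hA (InstOK_vals d hok)
    refine LK1.ex t (Tm.ground_of_vb0 htd) ?_
    rw [Fm.opn_of_vb hAvb]
    show LK1 models (A.msub ρ ::ₘ Fm.ex (A.msub ρ) ::ₘ Γ.map (Fm.msub ρ))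
    have : Fm.msub ρ (Fm.ex A) = Fm.ex (A.msub ρ) := rfl
    rwa [this] at l1
  | all h1 ih1 =>
    rename_i d Γ A σ
    intro ρ hok hctx heps
    obtain ⟨hAll, hΓ⟩ := CtxOfDom_cons.mp hctx
    have hA : Fm.VarsBelow d.numE d.numX A := by cases hAll with | all hA => exact hA
    have hctx' : CtxOfDom d.addE (Fm.opn (Tm.ev d.numE) A ::ₘ Γ) := by
      rw [Fm.opn_of_vb hA]
      exact CtxOfDom_cons.mpr ⟨hA.mono (by simp only [Dom.numE]; omega) le_rfl,
        CtxOfDom_addE hΓ⟩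
    have l1 := ih1 ρ hok hctx' heps
    rw [Fm.opn_of_vb hA] at l1
    simp only [Multiset.map_cons] at l1 ⊢
    show LK1 models (Fm.all (A.msub ρ) ::ₘ Γ.map (Fm.msub ρ))
    have hvals := InstOK_vals d hok
    have hAvb : Fm.VarsBelow d.numE 0 (A.msub ρ) := Fm.msub_vb hA hvals
    refine LK1.all d.numE ?_ ?_
    · intro B hB
      rcases Multiset.mem_cons.mp hB with rfl | hB
      · intro hev
        exact Fm.not_hasEv le_rfl hev (Fm.VarsBelow.all hAvb)
      · obtain ⟨C, hC, rfl⟩ := Multiset.mem_map.mp hB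
        intro hev
        exact Fm.not_hasEv le_rfl hev (Fm.msub_vb (hΓ C hC) hvals)
    · rw [Fm.opn_of_vb hAvb]
      exact l1

end Main
section Main2

variable {Psi : ℕ → Type} {meet : ∀ {n}, Psi n → Psi n → Psi n}
    {proj : ∀ {n}, Psi (n+1) → Psi n}
    {eps : ∀ {n}, (ℕ → Tm) → Psi n → Prop}
    {models : Set Lit → Prop}
    {bbc : ∀ d : Dom, Set Lit → Psi d.numX → Prop}

theorem DI_complete
    (Aproj : ∀ (d : Dom) (ρ : ℕ → Tm) (t : Tm) (σ : Psi (d.numX + 1)),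
      InstOK d ρ → TmOfDom d t → eps (extend ρ d.numX t) σ → eps ρ (proj σ))
    (Ameet : ∀ {n} (ρ : ℕ → Tm) (σ σ' : Psi n),
      (eps ρ σ ∧ eps ρ σ') ↔ eps ρ (meet σ σ'))
    (Apg : ∀ (d : Dom) (A : Set Lit),
      (∀ l ∈ A, ∀ t ∈ l.2.2, Tm.VarsBelow d.numE d.numX t) →
      ∀ ρ : ℕ → Tm, InstOK d ρ →
        (models ((Lit.msub ρ) '' A) ↔ ∃ σ : Psi d.numX, bbc d A σ ∧ eps ρ σ))
    {Γ : Multiset Fm} (h : LK1 models Γ) :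
    ∀ (d : Dom) (ρ : ℕ → Tm) (Δ : Multiset Fm), InstOK d ρ → CtxOfDom d Δ →
      Δ.map (Fm.msub ρ) = Γ →
      ∃ σ : Psi d.numX,
        DI Psi (fun σ σ' => meet σ σ') (fun σ => proj σ) bbc d Δ σ ∧ eps ρ σ := by
  haveI : DecidableEq Fm := Classical.decEq Fm
  induction h with
  | ax Γ hm =>
    intro d ρ Δ hok hctx hmap
    have hvars : ∀ l ∈ lits Δ, ∀ t ∈ l.2.2, Tm.VarsBelow d.numE d.numX t := by
      intro l hl t ht
      have hfm : Fm.VarsBelow d.numE d.numX (Fm.lit l.1 l.2.1 l.2.2) := hctx _ hl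
      cases hfm with | lit _ _ _ hts => exact hts t ht
    have : models (Lit.msub ρ '' lits Δ) := by rw [← lits_msub, hmap]; exact hm
    obtain ⟨σ, hbbc, heps⟩ := (Apg d (lits Δ) hvars ρ hok).mp this
    exact ⟨σ, DI.ax Δ σ hbbc, heps⟩
  | conj h1 h2 ih1 ih2 =>
    rename_i Γ A B
    intro d ρ Δ hok hctx hmap
    obtain ⟨C, hC, hCeq, hrest⟩ := (Multiset.map_eq_cons _ _ _ _).mpr hmap
    obtain ⟨A', B', rfl, rfl, rfl⟩ := Fm.msub_eq_conj hCeq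
    have hΔ : Δ = Fm.conj A' B' ::ₘ Δ.erase (Fm.conj A' B') := (Multiset.cons_erase hC).symm
    set Δ' := Δ.erase (Fm.conj A' B') with hΔ'
    obtain ⟨hAB, hctx'⟩ := CtxOfDom_cons.mp (hΔ ▸ hctx)
    have hA : FmOfDom d A' := by cases hAB with | conj hA hB => exact hA
    have hB : FmOfDom d B' := by cases hAB with | conj hA hB => exact hB
    obtain ⟨σ1, hd1, he1⟩ := ih1 d ρ (A' ::ₘ Δ') hok (CtxOfDom_cons.mpr ⟨hA, hctx'⟩)
      (by simp only [Multiset.map_cons, hrest])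
    obtain ⟨σ2, hd2, he2⟩ := ih2 d ρ (B' ::ₘ Δ') hok (CtxOfDom_cons.mpr ⟨hB, hctx'⟩)
      (by simp only [Multiset.map_cons, hrest])
    exact ⟨meet σ1 σ2, hΔ ▸ DI.conj hd1 hd2, (Ameet ρ σ1 σ2).mp ⟨he1, he2⟩⟩
  | disj h1 ih1 =>
    rename_i Γ A B
    intro d ρ Δ hok hctx hmap
    obtain ⟨C, hC, hCeq, hrest⟩ := (Multiset.map_eq_cons _ _ _ _).mpr hmap
    obtain ⟨A', B', rfl, rfl, rfl⟩ := Fm.msub_eq_disj hCeq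
    have hΔ : Δ = Fm.disj A' B' ::ₘ Δ.erase (Fm.disj A' B') := (Multiset.cons_erase hC).symm
    set Δ' := Δ.erase (Fm.disj A' B') with hΔ'
    obtain ⟨hAB, hctx'⟩ := CtxOfDom_cons.mp (hΔ ▸ hctx)
    have hA : FmOfDom d A' := by cases hAB with | disj hA hB => exact hA
    have hB : FmOfDom d B' := by cases hAB with | disj hA hB => exact hB
    obtain ⟨σ1, hd1, he1⟩ := ih1 d ρ (A' ::ₘ B' ::ₘ Δ') hok
      (CtxOfDom_cons.mpr ⟨hA, CtxOfDom_cons.mpr ⟨hB, hctx'⟩⟩)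
      (by simp only [Multiset.map_cons, hrest])
    exact ⟨σ1, hΔ ▸ DI.disj hd1, he1⟩
  | ex t hg h1 ih1 =>
    rename_i Γ A
    intro d ρ Δ hok hctx hmap
    obtain ⟨C, hC, hCeq, hrest⟩ := (Multiset.map_eq_cons _ _ _ _).mpr hmap
    obtain ⟨A', rfl, rfl⟩ := Fm.msub_eq_ex hCeq
    have hΔ : Δ = Fm.ex A' ::ₘ Δ.erase (Fm.ex A') := (Multiset.cons_erase hC).symm
    set Δ' := Δ.erase (Fm.ex A') with hΔ'
    obtain ⟨hEx, hctx'⟩ := CtxOfDom_cons.mp (hΔ ▸ hctx)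
    have hA : Fm.VarsBelow d.numE d.numX A' := by cases hEx with | ex hA => exact hA
    -- extend the instantiation with a closed dummy term
    set c : Tm := Tm.fn 0 [] with hc
    have hcd : TmOfDom d c := Tm.VarsBelow.fn 0 [] (by intro t ht; cases ht)
    have hagree : ∀ i < d.numX, ρ i = extend ρ d.numX c i := by
      intro i hi; simp only [extend]; rw [if_neg (by omega)]
    have hok' : InstOK d.addX (extend ρ d.numX c) := by
      refine ⟨InstOK_congr d hagree hok, ?_⟩
      simp only [extend, if_pos rfl]; exact hcd
    have hctx'' : CtxOfDom d.addX (Fm.opn (Tm.mv d.numX) A' ::ₘ Fm.ex A' ::ₘ Δ') := by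
      rw [Fm.opn_of_vb hA]
      exact CtxOfDom_cons.mpr ⟨hA.mono le_rfl (by simp only [Dom.numX]; omega),
        CtxOfDom_addX (CtxOfDom_cons.mpr ⟨hEx, hctx'⟩)⟩
    have hAvb : Fm.VarsBelow d.numE 0 (A'.msub ρ) := Fm.msub_vb hA (InstOK_vals d hok)
    have hmap' : Multiset.map (Fm.msub (extend ρ d.numX c))
        (Fm.opn (Tm.mv d.numX) A' ::ₘ Fm.ex A' ::ₘ Δ') =
        Fm.opn t (A'.msub ρ) ::ₘ Fm.ex (A'.msub ρ) ::ₘ Multiset.map (Fm.msub ρ) Δ' := by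
      rw [Fm.opn_of_vb hA]
      simp only [Multiset.map_cons]
      rw [← Fm.msub_congr hA hagree, ← Fm.msub_congr hEx hagree,
        show Multiset.map (Fm.msub (extend ρ d.numX c)) Δ' = Multiset.map (Fm.msub ρ) Δ' from
          Multiset.map_congr rfl (fun B hB => (Fm.msub_congr (hctx' B hB) hagree).symm)]
      rw [Fm.opn_of_vb hAvb]
      rfl
    obtain ⟨σ, hd1, he1⟩ := ih1 d.addX (extend ρ d.numX c)
      (Fm.opn (Tm.mv d.numX) A' ::ₘ Fm.ex A' ::ₘ Δ') hok' hctx''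
      (by rw [hmap', hrest])
    exact ⟨proj σ, hΔ ▸ DI.ex hd1, Aproj d ρ c σ hok hcd he1⟩
  | all y hfresh h1 ih1 =>
    rename_i Γ A
    intro d ρ Δ hok hctx hmap
    obtain ⟨C, hC, hCeq, hrest⟩ := (Multiset.map_eq_cons _ _ _ _).mpr hmap
    obtain ⟨A', rfl, rfl⟩ := Fm.msub_eq_all hCeq
    have hΔ : Δ = Fm.all A' ::ₘ Δ.erase (Fm.all A') := (Multiset.cons_erase hC).symm
    set Δ' := Δ.erase (Fm.all A') with hΔ'
    obtain ⟨hAll, hctx'⟩ := CtxOfDom_cons.mp (hΔ ▸ hctx)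
    have hA : Fm.VarsBelow d.numE d.numX A' := by cases hAll with | all hA => exact hA
    have hAvb : Fm.VarsBelow d.numE 0 (A'.msub ρ) := Fm.msub_vb hA (InstOK_vals d hok)
    have hctx'' : CtxOfDom d.addE (Fm.opn (Tm.ev d.numE) A' ::ₘ Δ') := by
      rw [Fm.opn_of_vb hA]
      exact CtxOfDom_cons.mpr ⟨hA.mono (by simp only [Dom.numE]; omega) le_rfl,
        CtxOfDom_addE hctx'⟩
    have hmap' : Multiset.map (Fm.msub ρ) (Fm.opn (Tm.ev d.numE) A' ::ₘ Δ') =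
        Fm.opn (Tm.ev y) (A'.msub ρ) ::ₘ Multiset.map (Fm.msub ρ) Δ' := by
      rw [Fm.opn_of_vb hA]
      simp only [Multiset.map_cons]
      rw [Fm.opn_of_vb hAvb]
    obtain ⟨σ, hd1, he1⟩ := ih1 d.addE ρ (Fm.opn (Tm.ev d.numE) A' ::ₘ Δ') hok hctx''
      (by rw [hmap', hrest])
    exact ⟨σ, hΔ ▸ DI.all hd1, he1⟩

end Main2
/-- Soundness and completeness of `DI` for the initial domain: under the axioms
Aπ, Aε, A∧ and Apg (and the compatibility relation only depending on the
declared meta-variables), for a context `Γ` of the initial domain `d₀`: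
there is a constraint `σ ∈ Ψ_{d₀}` with `⊢^{d₀} Γ → σ` derivable in `DI` and
the empty instantiation compatible with `σ`, iff `⊢ Γ` is derivable in `LK1`. -/
theorem DI_sound_complete_initial (Psi : ℕ → Type)
    (meet : ∀ {n}, Psi n → Psi n → Psi n)
    (proj : ∀ {n}, Psi (n+1) → Psi n)
    (bind : ∀ {n}, Psi (n+1) → (ℕ → Tm) → Tm)
    (eps : ∀ {n}, (ℕ → Tm) → Psi n → Prop)
    (models : Set Lit → Prop)
    (bbc : ∀ d : Dom, Set Lit → Psi d.numX → Prop)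
    (Airrel : ∀ {n} (ρ ρ' : ℕ → Tm) (σ : Psi n),
      (∀ i < n, ρ i = ρ' i) → eps ρ σ → eps ρ' σ)
    (Aproj : ∀ (d : Dom) (ρ : ℕ → Tm) (t : Tm) (σ : Psi (d.numX + 1)),
      InstOK d ρ → TmOfDom d t → eps (extend ρ d.numX t) σ → eps ρ (proj σ))
    (Aeps : ∀ (d : Dom) (ρ : ℕ → Tm) (σ : Psi (d.numX + 1)), InstOK d ρ →
      eps ρ (proj σ) → eps (extend ρ d.numX (bind σ ρ)) σ)
    (Abind : ∀ (d : Dom) (ρ : ℕ → Tm) (σ : Psi (d.numX + 1)), InstOK d ρ →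
      TmOfDom d (bind σ ρ))
    (Ameet : ∀ {n} (ρ : ℕ → Tm) (σ σ' : Psi n),
      (eps ρ σ ∧ eps ρ σ') ↔ eps ρ (meet σ σ'))
    (Apg : ∀ (d : Dom) (A : Set Lit),
      (∀ l ∈ A, ∀ t ∈ l.2.2, Tm.VarsBelow d.numE d.numX t) →
      ∀ ρ : ℕ → Tm, InstOK d ρ →
        (models ((Lit.msub ρ) '' A) ↔ ∃ σ : Psi d.numX, bbc d A σ ∧ eps ρ σ))
    (Γ : Multiset Fm) (hΓ : CtxOfDom Dom.init Γ) :
    (∃ σ : Psi Dom.init.numX,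
        DI Psi (fun σ σ' => meet σ σ') (fun σ => proj σ) bbc Dom.init Γ σ ∧
          eps emptyInst σ) ↔
      LK1 models Γ := by
  have hid : Γ.map (Fm.msub emptyInst) = Γ := by
    rw [Multiset.map_congr rfl (fun A hA => Fm.msub_of_vb0 (hΓ A hA))]
    exact Multiset.map_id Γ
  constructor
  · rintro ⟨σ, hDI, heps⟩
    have := DI_sound (Psi := Psi) (meet := @meet) (proj := @proj) (bind := @bind) (eps := @eps) (models := models) (bbc := bbc) Aproj Aeps Abind
      (fun ρ σ σ' => Ameet ρ σ σ') Apg hDI emptyInst trivial hΓ heps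
    rwa [hid] at this
  · intro h
    exact DI_complete (Psi := Psi) (meet := @meet) (proj := @proj) (eps := @eps) (models := models) (bbc := bbc) Aproj (fun ρ σ σ' => Ameet ρ σ σ') Apg h
      Dom.init emptyInst Γ trivial hΓ hid
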